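/- arXiv:2104.04865 — 2 statements merged into one kernel-verified Lean document; each statement's English description precedes it below -/
import Mathlib

section
/- Let Ω be a compact Hausdorff extremally disconnected space, let (e_n)_{n∈ℕ} be a sequence in C(Ω;ℝ) and e ∈ C(Ω;ℝ). Then the following are equivalent: (a) (e_n) order-converges to e, i.e., there is a net (f_i)_{i∈I} in C(Ω;ℝ) decreasing to 0 such that for every i ∈ I there is n_i ∈ ℕ with |e_n − e| ≤ f_i for all n ≥ n_i; (b) (e_n) is bounded in the supremum norm and there is a residual set D ⊆ Ω such that lim_{n→∞} e_n(ω) = e(ω) for every ω ∈ D. -/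
open Filter

/-- A net in `C(Ω;ℝ)` decreases to `0`: it is antitone, nonnegative, and `0` is the
greatest lower bound of its range. -/
def DecreasesToZero {Ω : Type*} [TopologicalSpace Ω] {I : Type*} [Preorder I]
    (f : I → C(Ω, ℝ)) : Prop :=
  (∀ i j : I, i ≤ j → 0 ≤ f j ∧ f j ≤ f i) ∧ IsGLB (Set.range f) 0

/-- The sequence `e` order-converges to `e₀` in `C(Ω;ℝ)`: some net decreasing to `0`
eventually dominates `|e n − e₀|`. -/
def OrderTendstoSeq {Ω : Type*} [TopologicalSpace Ω]
    (e : ℕ → C(Ω, ℝ)) (e₀ : C(Ω, ℝ)) : Prop :=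
  ∃ (I : Type) (pre : Preorder I),
    IsDirected I (fun i j => pre.le i j) ∧ Nonempty I ∧
    ∃ f : I → C(Ω, ℝ), @DecreasesToZero Ω _ I pre f ∧
      ∀ i : I, ∃ n₀ : ℕ, ∀ n : ℕ, n₀ ≤ n → |e n - e₀| ≤ f i

/-!
If `f i` decreases to `0`, then for every `ε > 0` the open set `⋃ i, {f i < ε}` is dense:
otherwise `ε` times the indicator of the closure of its exterior, which is clopen because `Ω` is
extremally disconnected, would be a nonzero continuous lower bound of the `f i`. Intersecting
over `ε = 1 / (k + 1)` gives a residual set on which `e n → e₀`.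

Conversely, with `M` a bound for `|e n - e₀|`, let `U` be the open set where some `|e n - e₀|`
with `n ≥ m` exceeds `ε`. Then `ε + M · 1_{closure U}` is continuous and dominates the tail
from `m` on. Away from the boundaries of these sets (a meagre set) and on the residual set of
pointwise convergence, each point sees the value `ε` for large `m`; by Baire, a continuous lower
bound of all these majorants is therefore `≤ ε` everywhere, hence `≤ 0`. The partial infima of
this countable family form the required decreasing sequence.
-/

open Set Topology

namespace ContinuousMap

variable {Ω : Type*} [TopologicalSpace Ω]

theorem norm_le_norm_of_abs_le [CompactSpace Ω] {a b : C(Ω, ℝ)} (h : |a| ≤ b) : ‖a‖ ≤ ‖b‖ :=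
  (norm_le _ (norm_nonneg b)).2 fun ω =>
    calc ‖a ω‖ = |a ω| := Real.norm_eq_abs _
      _ ≤ b ω := h ω
      _ ≤ ‖b ω‖ := Real.le_norm_self _
      _ ≤ ‖b‖ := norm_coe_le_norm b ω

end ContinuousMap

theorem ExtremallyDisconnected.isClopen_closure {Ω : Type*} [TopologicalSpace Ω]
    [ExtremallyDisconnected Ω] {U : Set Ω} (hU : IsOpen U) : IsClopen (closure U) :=
  ⟨isClosed_closure, ExtremallyDisconnected.open_closure U hU⟩

theorem IsClosed.eq_univ_of_mem_residual {Ω : Type*} [TopologicalSpace Ω] [BaireSpace Ω]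
    {s : Set Ω} (hs : IsClosed s) (hres : s ∈ residual Ω) : s = univ := by
  rw [← hs.closure_eq, ← dense_iff_closure_eq]
  exact dense_of_mem_residual hres

section OrderConvergence

variable {Ω : Type*} [TopologicalSpace Ω]

theorem ExtremallyDisconnected.dense_iUnion_lt_of_isGLB_zero [ExtremallyDisconnected Ω]
    {ι : Type*} {f : ι → C(Ω, ℝ)} (hf : IsGLB (range f) 0) {ε : ℝ} (hε : 0 < ε) :
    Dense (⋃ i, {ω | f i ω < ε}) := by
  set V := (closure (⋃ i, {ω | f i ω < ε}))ᶜ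
  have hK : IsClopen (closure V) := isClopen_closure isClosed_closure.isOpen_compl
  set g : C(Ω, ℝ) := ((LocallyConstant.const Ω ε).indicator hK).toContinuousMap
  have hg_apply : ∀ ω, g ω = (closure V).indicator (fun _ => ε) ω := fun _ => rfl
  have hg : g ≤ 0 := hf.2 <| by
    rintro _ ⟨i, rfl⟩
    refine ContinuousMap.le_def.2 fun ω => ?_
    rw [hg_apply]
    by_cases hω : ω ∈ closure V
    · rw [indicator_of_mem hω]
      refine closure_minimal (fun x hx => ?_) (isClosed_le continuous_const (f i).continuous) hω
      exact not_lt.1 fun hlt => hx (subset_closure (mem_iUnion.2 ⟨i, (hlt : f i x < ε)⟩))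
    · rw [indicator_of_notMem hω]
      exact hf.1 ⟨i, rfl⟩ ω
  rw [dense_iff_closure_eq, ← compl_empty_iff]
  refine eq_empty_of_forall_notMem fun ω hω => ?_
  have := ContinuousMap.le_def.1 hg ω
  rw [hg_apply, indicator_of_mem (subset_closure hω)] at this
  exact this.not_gt hε

variable {e : ℕ → C(Ω, ℝ)} {e₀ : C(Ω, ℝ)}

theorem OrderTendstoSeq.exists_norm_le [CompactSpace Ω] (h : OrderTendstoSeq e e₀) :
    ∃ C : ℝ, ∀ n, ‖e n‖ ≤ C := by
  obtain ⟨I, _, -, ⟨i₀⟩, f, -, hdom⟩ := h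
  obtain ⟨n₀, hn₀⟩ := hdom i₀
  have hev : ∀ᶠ n in atTop, ‖e n‖ ≤ ‖f i₀‖ + ‖e₀‖ := eventually_atTop.2 ⟨n₀, fun n hn =>
    calc ‖e n‖ = ‖(e n - e₀) + e₀‖ := by rw [sub_add_cancel]
      _ ≤ ‖e n - e₀‖ + ‖e₀‖ := norm_add_le _ _
      _ ≤ ‖f i₀‖ + ‖e₀‖ := by grw [ContinuousMap.norm_le_norm_of_abs_le (hn₀ n hn)]⟩
  obtain ⟨C, hC⟩ := (isBoundedUnder_of_eventually_le hev).bddAbove_range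
  exact ⟨C, fun n => hC ⟨n, rfl⟩⟩

theorem OrderTendstoSeq.eventually_residual_tendsto [ExtremallyDisconnected Ω]
    (h : OrderTendstoSeq e e₀) :
    ∀ᶠ ω in residual Ω, Tendsto (fun n => e n ω) atTop (𝓝 (e₀ ω)) := by
  obtain ⟨I, _, -, -, f, ⟨-, hglb⟩, hdom⟩ := h
  have hsmall : ∀ᶠ ω in residual Ω, ∀ k : ℕ, ∃ i, f i ω < 1 / (k + 1) :=
    eventually_countable_forall.2 fun k => by
      have hdense := ExtremallyDisconnected.dense_iUnion_lt_of_isGLB_zero hglb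
        (Nat.one_div_pos_of_nat (n := k))
      filter_upwards [residual_of_dense_open
        (isOpen_iUnion fun i => isOpen_lt (f i).continuous continuous_const) hdense]
        with ω hω using mem_iUnion.1 hω |>.imp fun _ => id
  filter_upwards [hsmall] with ω hω
  refine Metric.tendsto_atTop.2 fun ε hε => ?_
  obtain ⟨k, hk⟩ := exists_nat_one_div_lt hε
  obtain ⟨i, hi⟩ := hω k
  obtain ⟨n₀, hn₀⟩ := hdom i
  refine ⟨n₀, fun n hn => ?_⟩
  calc dist (e n ω) (e₀ ω) = |e n - e₀| ω := Real.dist_eq _ _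
    _ ≤ f i ω := ContinuousMap.le_def.1 (hn₀ n hn) ω
    _ < 1 / (k + 1) := hi
    _ < ε := hk

open OrderDual in
theorem orderTendstoSeq_of_isGLB_zero {ι : Type*} [Countable ι] [Nonempty ι]
    {H : ι → C(Ω, ℝ)} (hH : IsGLB (range H) 0) (hdom : ∀ j, ∀ᶠ n in atTop, |e n - e₀| ≤ H j) :
    OrderTendstoSeq e e₀ := by
  obtain ⟨s, hs⟩ := exists_surjective_nat ι
  -- the partial infima of `H ∘ s`, as partial suprema in the order dual
  set F : ℕ → C(Ω, ℝ) := fun N => ofDual (partialSups (toDual ∘ H ∘ s) N)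
  have hF_le : ∀ {N} {g : C(Ω, ℝ)}, g ≤ F N ↔ ∀ j ≤ N, g ≤ H (s j) :=
    partialSups_le_iff (α := C(Ω, ℝ)ᵒᵈ) (a := toDual _)
  have hlower : lowerBounds (range F) = lowerBounds (range H) := by
    rw [← hs.range_comp]
    exact upperBounds_range_partialSups (toDual ∘ H ∘ s)
  refine ⟨ℕ, inferInstance, inferInstance, ⟨0⟩, F, ⟨fun i j hij => ⟨?_, ?_⟩, ?_⟩, fun N => ?_⟩
  · exact hF_le.2 fun k _ => hH.1 ⟨s k, rfl⟩
  · exact (partialSups (toDual ∘ H ∘ s)).monotone hij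
  · rwa [IsGLB, IsGreatest, hlower]
  · have hev : ∀ᶠ n in atTop, ∀ j ∈ Iic N, |e n - e₀| ≤ H (s j) :=
      (finite_Iic N).eventually_all.2 fun j _ => hdom (s j)
    exact eventually_atTop.1 (hev.mono fun n hn => hF_le.2 hn)

end OrderConvergence

section TailMajorant

variable {Ω : Type*} [TopologicalSpace Ω] (g : ℕ → C(Ω, ℝ)) (M ε : ℝ) (m : ℕ)

def tailExceedSet : Set Ω := ⋃ n ≥ m, {ω | ε < g n ω}

theorem isOpen_tailExceedSet : IsOpen (tailExceedSet g ε m) :=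
  isOpen_biUnion fun n _ => isOpen_lt continuous_const (g n).continuous

noncomputable def tailMajorant [ExtremallyDisconnected Ω] : C(Ω, ℝ) :=
  ContinuousMap.const Ω ε + ((LocallyConstant.const Ω M).indicator
    (ExtremallyDisconnected.isClopen_closure (isOpen_tailExceedSet g ε m))).toContinuousMap

variable [ExtremallyDisconnected Ω] {g M ε m}

theorem tailMajorant_apply (ω : Ω) :
    tailMajorant g M ε m ω = ε + (closure (tailExceedSet g ε m)).indicator (fun _ => M) ω :=
  rfl

theorem tailMajorant_nonneg (hM : 0 ≤ M) (hε : 0 ≤ ε) : 0 ≤ tailMajorant g M ε m :=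
  ContinuousMap.le_def.2 fun ω => add_nonneg hε (indicator_nonneg (fun _ _ => hM) ω)

theorem le_tailMajorant (hM : ∀ n ω, g n ω ≤ M) (hε : 0 ≤ ε) {n : ℕ} (hn : m ≤ n) :
    g n ≤ tailMajorant g M ε m := by
  refine ContinuousMap.le_def.2 fun ω => ?_
  rw [tailMajorant_apply]
  by_cases hω : ω ∈ closure (tailExceedSet g ε m)
  · rw [indicator_of_mem hω]
    linarith [hM n ω]
  · rw [indicator_of_notMem hω, add_zero]
    exact not_lt.1 fun hlt => hω (subset_closure (mem_iUnion₂.2 ⟨n, hn, hlt⟩))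

theorem eventually_residual_exists_tailMajorant_eq [BaireSpace Ω]
    (hg : ∀ᶠ ω in residual Ω, Tendsto (fun n => g n ω) atTop (𝓝 0)) (hε : 0 < ε) :
    ∀ᶠ ω in residual Ω, ∃ m, tailMajorant g M ε m ω = ε := by
  have hcob : ∀ᶠ ω in residual Ω, ∀ m, ω ∈ coborder (tailExceedSet g ε m) :=
    eventually_countable_forall.2 fun m =>
      coborder_mem_residual (isOpen_tailExceedSet g ε m).isLocallyClosed
  filter_upwards [hg, hcob] with ω hω hωcob
  obtain ⟨m, hm⟩ := eventually_atTop.1 (hω.eventually_lt_const hε)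
  have hnot : ω ∉ tailExceedSet g ε m := fun hex =>
    let ⟨n, hn, hlt⟩ := mem_iUnion₂.1 hex
    (hm n hn).not_gt hlt
  refine ⟨m, ?_⟩
  rw [tailMajorant_apply, indicator_of_notMem (fun hcl => hωcob m ⟨hcl, hnot⟩), add_zero]

theorem isGLB_range_tailMajorant [BaireSpace Ω] (hM : 0 ≤ M)
    (hg : ∀ᶠ ω in residual Ω, Tendsto (fun n => g n ω) atTop (𝓝 0)) :
    IsGLB (range fun p : ℕ × ℕ => tailMajorant g M (1 / (p.2 + 1)) p.1) 0 := by
  refine ⟨?_, fun b hb => ?_⟩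
  · rintro _ ⟨⟨m, k⟩, rfl⟩
    exact tailMajorant_nonneg hM Nat.one_div_pos_of_nat.le
  have hbk : ∀ k : ℕ, ∀ ω, b ω ≤ 1 / (k + 1) := fun k => by
    refine eq_univ_iff_forall.1 <|
      (isClosed_le b.continuous continuous_const).eq_univ_of_mem_residual ?_
    filter_upwards [eventually_residual_exists_tailMajorant_eq (M := M) hg
      (Nat.one_div_pos_of_nat (n := k))] with ω ⟨m, hm⟩
    exact hm ▸ ContinuousMap.le_def.1 (hb ⟨(m, k), rfl⟩) ω
  exact ContinuousMap.le_def.2 fun ω =>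
    ge_of_tendsto' tendsto_one_div_add_atTop_nhds_zero_nat fun k => hbk k ω

end TailMajorant

/-- On a compact Hausdorff extremally disconnected space, a sequence in
`C(Ω;ℝ)` order-converges to `e₀` if and only if it is norm-bounded and converges
pointwise to `e₀` on a residual set. -/
theorem orderTendsto_iff_residual_pointwise {Ω : Type*} [TopologicalSpace Ω]
    [CompactSpace Ω] [T2Space Ω] [ExtremallyDisconnected Ω]
    (e : ℕ → C(Ω, ℝ)) (e₀ : C(Ω, ℝ)) :
    OrderTendstoSeq e e₀ ↔
      (∃ C : ℝ, ∀ n : ℕ, ‖e n‖ ≤ C) ∧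
        ∃ D ∈ residual Ω, ∀ ω ∈ D,
          Tendsto (fun n => e n ω) atTop (nhds (e₀ ω)) := by
  refine ⟨fun h => ⟨h.exists_norm_le, eventually_iff_exists_mem.1 h.eventually_residual_tendsto⟩,
    ?_⟩
  rintro ⟨⟨C, hC⟩, hconv⟩
  have hbound : ∀ n ω, |e n - e₀| ω ≤ C + ‖e₀‖ := fun n ω =>
    calc |e n - e₀| ω = ‖(e n - e₀) ω‖ := (Real.norm_eq_abs _).symm
      _ ≤ ‖e n - e₀‖ := ContinuousMap.norm_coe_le_norm _ _
      _ ≤ ‖e n‖ + ‖e₀‖ := norm_sub_le _ _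
      _ ≤ C + ‖e₀‖ := by grw [hC n]
  have hC₀ : 0 ≤ C + ‖e₀‖ := add_nonneg ((norm_nonneg _).trans (hC 0)) (norm_nonneg _)
  have hg : ∀ᶠ ω in residual Ω, Tendsto (fun n => |e n - e₀| ω) atTop (𝓝 0) := by
    filter_upwards [eventually_iff_exists_mem.2 hconv] with ω hω
    simpa using (hω.sub_const (e₀ ω)).abs
  exact orderTendstoSeq_of_isGLB_zero (isGLB_range_tailMajorant hC₀ hg) fun ⟨m, _⟩ =>
    eventually_atTop.2 ⟨m, fun _ hn => le_tailMajorant hbound Nat.one_div_pos_of_nat.le hn⟩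
end

section
/- Let A be a commutative unital C*-algebra, let E be a Hilbert module over A, and let y ∈ E. Then √⟪y,y⟫ is the least upper bound in A of the set {|⟪x,y⟫| : x ∈ E, ⟪x,x⟫ ≤ 1}. -/
noncomputable section

/-- A Hilbert module structure over a commutative unital C*-algebra `A` on the unital
`A`-module `E`: an `A`-valued inner product, `A`-linear in the first variable, conjugate
symmetric and positive definite, such that `E` is complete for the induced norm
`x ↦ √‖⟪x,x⟫‖`. -/
structure HilbertModuleStruct (A : Type*) [CommCStarAlgebra A] [PartialOrder A]
    [StarOrderedRing A] (E : Type*) [AddCommGroup E] [Module A E] where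
  inner : E → E → A
  add_left : ∀ x y z : E, inner (x + y) z = inner x z + inner y z
  smul_left : ∀ (a : A) (x y : E), inner (a • x) y = a * inner x y
  star_inner : ∀ x y : E, star (inner x y) = inner y x
  inner_self_nonneg : ∀ x : E, 0 ≤ inner x x
  inner_self_eq_zero : ∀ x : E, inner x x = 0 → x = 0
  complete : ∀ u : ℕ → E,
    (∀ ε : ℝ, 0 < ε → ∃ N : ℕ, ∀ m n : ℕ, N ≤ m → N ≤ n →
      ‖inner (u m - u n) (u m - u n)‖ < ε) →
    ∃ x : E, ∀ ε : ℝ, 0 < ε → ∃ N : ℕ, ∀ n : ℕ, N ≤ n → ‖inner (u n - x) (u n - x)‖ < ε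

/-- The norm on a Hilbert module induced by the `A`-valued inner product. -/
def HilbertModuleStruct.nrm {A : Type*} [CommCStarAlgebra A] [PartialOrder A]
    [StarOrderedRing A] {E : Type*} [AddCommGroup E] [Module A E]
    (hE : HilbertModuleStruct A E) (x : E) : ℝ :=
  Real.sqrt ‖hE.inner x x‖

/-- The operator norm of a bounded `A`-linear map between Hilbert modules. -/
def opNorm {A : Type*} [CommCStarAlgebra A] [PartialOrder A] [StarOrderedRing A]
    {E F : Type*} [AddCommGroup E] [Module A E] [AddCommGroup F] [Module A F]
    (hE : HilbertModuleStruct A E) (hF : HilbertModuleStruct A F) (T : E →ₗ[A] F) : ℝ :=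
  sInf {C : ℝ | 0 ≤ C ∧ ∀ x : E, hF.nrm (T x) ≤ C * hE.nrm x}

/-!
Evaluation at the characters `χ` of `A` (Gelfand duality) reduces the order of `A` to the order
of real numbers. Character by character one gets the Cauchy–Schwarz inequality
`|⟪x, y⟫|² ≤ ⟪x, x⟫ ⟪y, y⟫`, hence the upper bound. Conversely, at a character with
`χ ⟪y, y⟫ = s > 0` the vector `x = (max (√⟪y, y⟫) (√s))⁻¹ • y`, built by functional calculus,
has `⟪x, x⟫ ≤ 1` and `χ |⟪x, y⟫| = √s`, so every upper bound dominates `√⟪y, y⟫` at `χ`.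
-/

open WeakDual ComplexOrder

section Characters

variable {A : Type*} [CommCStarAlgebra A]

lemma ofReal_re_character_apply (χ : characterSpace ℂ A) {a : A} (ha : IsSelfAdjoint a) :
    ((χ a).re : ℂ) = χ a :=
  Complex.conj_eq_iff_re.mp (ha.map χ).star_eq

lemma re_character_apply_mul (χ : characterSpace ℂ A) {a : A} (ha : IsSelfAdjoint a) (b : A) :
    (χ (a * b)).re = (χ a).re * (χ b).re := by
  rw [map_mul, Complex.mul_re, Complex.conj_eq_iff_im.mp (ha.map χ).star_eq, zero_mul, sub_zero]

lemma character_apply_cfc (χ : characterSpace ℂ A) (f : ℝ → ℝ) {a : A} (ha : IsSelfAdjoint a)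
    (hf : ContinuousOn f (spectrum ℝ a) := by cfc_cont_tac) :
    χ (cfc f a) = f (χ a).re := by
  rw [StarAlgHomClass.map_cfc (S := ℂ) χ f a, ← ofReal_re_character_apply χ ha]
  exact cfc_algebraMap (A := ℂ) _ f

variable [PartialOrder A] [StarOrderedRing A]

lemma re_character_apply_mono (χ : characterSpace ℂ A) {a b : A} (hab : a ≤ b) :
    (χ a).re ≤ (χ b).re :=
  (Complex.le_def.mp (OrderHomClass.mono χ hab)).1

lemma re_character_apply_nonneg (χ : characterSpace ℂ A) {a : A} (ha : 0 ≤ a) :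
    0 ≤ (χ a).re := by
  simpa using re_character_apply_mono χ ha

lemma re_character_apply_sqrt (χ : characterSpace ℂ A) {a : A} (ha : 0 ≤ a) :
    (χ (CFC.sqrt a)).re = √(χ a).re := by
  rw [CFC.sqrt_eq_real_sqrt a, cfcₙ_eq_cfc, character_apply_cfc χ _ ha.isSelfAdjoint,
    Complex.ofReal_re]

lemma le_iff_forall_character_le {a b : A} : a ≤ b ↔ ∀ χ : characterSpace ℂ A, χ a ≤ χ b := by
  rw [← map_le_map_iff (gelfandStarTransform A), ContinuousMap.le_def]
  rfl

lemma le_of_forall_re_character_le {a b : A} (ha : IsSelfAdjoint a) (hb : IsSelfAdjoint b)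
    (h : ∀ χ : characterSpace ℂ A, (χ a).re ≤ (χ b).re) : a ≤ b :=
  le_iff_forall_character_le.mpr fun χ => by
    rw [← ofReal_re_character_apply χ ha, ← ofReal_re_character_apply χ hb]
    exact Complex.real_le_real.mpr (h χ)

end Characters

namespace HilbertModuleStruct

variable {A : Type*} [CommCStarAlgebra A] [PartialOrder A] [StarOrderedRing A]
  {E : Type*} [AddCommGroup E] [Module A E] (hE : HilbertModuleStruct A E)

local notation "⟪" x ", " y "⟫" => HilbertModuleStruct.inner hE x y

lemma inner_smul_right (a : A) (x y : E) : ⟪x, a • y⟫ = star a * ⟪x, y⟫ := by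
  rw [← hE.star_inner, hE.smul_left, star_mul, hE.star_inner, mul_comm]

lemma inner_neg_left (x y : E) : ⟪-x, y⟫ = -⟪x, y⟫ := by
  rw [← neg_one_smul A x, hE.smul_left, neg_one_mul]

lemma inner_sub_left (x y z : E) : ⟪x - y, z⟫ = ⟪x, z⟫ - ⟪y, z⟫ := by
  rw [sub_eq_add_neg, hE.add_left, hE.inner_neg_left, sub_eq_add_neg]

lemma inner_sub_right (x y z : E) : ⟪x, y - z⟫ = ⟪x, y⟫ - ⟪x, z⟫ := by
  rw [← hE.star_inner, hE.inner_sub_left, star_sub, hE.star_inner, hE.star_inner]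

lemma inner_zero_left (y : E) : ⟪0, y⟫ = 0 := by
  simpa using hE.inner_sub_left 0 0 y

lemma inner_smul_sub_smul_self (a b : A) (x y : E) :
    ⟪a • x - b • y, a • x - b • y⟫ =
      a * star a * ⟪x, x⟫ - a * star b * ⟪x, y⟫ - b * star a * star ⟪x, y⟫
        + b * star b * ⟪y, y⟫ := by
  rw [hE.star_inner]
  simp only [inner_sub_left, inner_sub_right, smul_left, inner_smul_right]
  ring

lemma star_inner_mul_inner_le (x y : E) : star ⟪x, y⟫ * ⟪x, y⟫ ≤ ⟪x, x⟫ * ⟪y, y⟫ := by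
  set c := ⟪x, y⟫
  set q := ⟪x, x⟫
  set p := ⟪y, y⟫
  have hq : IsSelfAdjoint q := (hE.inner_self_nonneg x).isSelfAdjoint
  have hp : IsSelfAdjoint p := (hE.inner_self_nonneg y).isSelfAdjoint
  have hn : IsSelfAdjoint (star c * c) := .star_mul_self c
  -- At a character `χ`, these three settle the cases `χ p > 0`, `χ q > 0` and `χ p = χ q = 0`.
  have h₁ : 0 ≤ p * (p * q - star c * c) := by
    convert hE.inner_self_nonneg (p • x - c • y) using 1
    rw [inner_smul_sub_smul_self, hp.star_eq]; ring
  have h₂ : 0 ≤ q * (q * p - star c * c) := by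
    convert hE.inner_self_nonneg (q • y - star c • x) using 1
    rw [inner_smul_sub_smul_self, hq.star_eq, star_star, ← hE.star_inner x y, star_star]; ring
  have h₃ : 0 ≤ q - (star c * c + star c * c) + star c * c * p := by
    convert hE.inner_self_nonneg (x - c • y) using 1
    rw [← one_smul A x, inner_smul_sub_smul_self, star_one]; ring
  refine le_of_forall_re_character_le hn (hq.mul hp) fun χ => ?_
  have hY : 0 ≤ (χ p).re := re_character_apply_nonneg χ (hE.inner_self_nonneg y)
  have h₁' := re_character_apply_nonneg χ h₁
  have h₂' := re_character_apply_nonneg χ h₂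
  have h₃' := re_character_apply_nonneg χ h₃
  simp only [re_character_apply_mul χ hp, re_character_apply_mul χ hq, re_character_apply_mul χ hn,
    map_sub, map_add, Complex.sub_re, Complex.add_re] at h₁' h₂' h₃' ⊢
  rcases hY.lt_or_eq with hY | hY
  · nlinarith
  · rw [← hY] at h₂' h₃' ⊢
    nlinarith

lemma abs_inner_le_sqrt_inner_self {x : E} (hx : ⟪x, x⟫ ≤ 1) (y : E) :
    CFC.abs ⟪x, y⟫ ≤ CFC.sqrt ⟪y, y⟫ :=
  CFC.sqrt_le_sqrt _ _ <| (hE.star_inner_mul_inner_le x y).trans <|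
    mul_le_of_le_one_left (hE.inner_self_nonneg y) hx

lemma exists_re_character_abs_inner_eq (y : E) {δ : ℝ} (hδ : 0 < δ) :
    ∃ x, ⟪x, x⟫ ≤ 1 ∧ ∀ χ : characterSpace ℂ A,
      (χ (CFC.abs ⟪x, y⟫)).re = (max √(χ ⟪y, y⟫).re δ)⁻¹ * (χ ⟪y, y⟫).re := by
  have hp : 0 ≤ ⟪y, y⟫ := hE.inner_self_nonneg y
  set f : ℝ → ℝ := fun t => (max √t δ)⁻¹
  have hf : Continuous f :=
    (Real.continuous_sqrt.max continuous_const).inv₀ fun t => (hδ.trans_le (le_max_right _ _)).ne'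
  have hd : IsSelfAdjoint (cfc f ⟪y, y⟫) := cfc_predicate f _
  have hdp : cfc f ⟪y, y⟫ * ⟪y, y⟫ = cfc (fun t => f t * t) ⟪y, y⟫ := by
    rw [cfc_mul f (fun t => t) _, cfc_id' ℝ ⟪y, y⟫]
  refine ⟨cfc f ⟪y, y⟫ • y, ?_, fun χ => ?_⟩
  · rw [hE.smul_left, inner_smul_right, hd.star_eq, hdp, ← cfc_mul f (fun t => f t * t) _]
    refine cfc_le_one _ _ fun t ht => ?_
    have ht₀ : 0 ≤ t := spectrum_nonneg_of_nonneg hp ht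
    have hm : 0 < max √t δ := hδ.trans_le (le_max_right _ _)
    calc f t * (f t * t) = t / max √t δ ^ 2 := by simp only [f]; field_simp
      _ ≤ 1 := (div_le_one (by positivity)).mpr <| by
        simpa [Real.sq_sqrt ht₀] using pow_le_pow_left₀ (Real.sqrt_nonneg t) (le_max_left √t δ) 2
  · have hnonneg : 0 ≤ cfc (fun t => f t * t) ⟪y, y⟫ := cfc_nonneg fun t ht => by
      have := spectrum_nonneg_of_nonneg hp ht
      positivity
    rw [hE.smul_left, hdp, CFC.abs_of_nonneg _ hnonneg, character_apply_cfc χ (fun t => f t * t)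
      hp.isSelfAdjoint (hf.mul continuous_id).continuousOn, Complex.ofReal_re]

lemma sqrt_inner_self_le {y : E} {b : A} (hb : ∀ x, ⟪x, x⟫ ≤ 1 → CFC.abs ⟪x, y⟫ ≤ b) :
    CFC.sqrt ⟪y, y⟫ ≤ b := by
  have hp := hE.inner_self_nonneg y
  have hb₀ : 0 ≤ b := by
    simpa [inner_zero_left] using hb 0 (by simp [inner_zero_left])
  refine le_of_forall_re_character_le (CFC.sqrt_nonneg _).isSelfAdjoint hb₀.isSelfAdjoint
    fun χ => ?_
  rw [re_character_apply_sqrt χ hp]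
  rcases (re_character_apply_nonneg χ hp).eq_or_lt with hs | hs
  · rw [← hs, Real.sqrt_zero]
    exact re_character_apply_nonneg χ hb₀
  obtain ⟨x, hx, hxy⟩ := hE.exists_re_character_abs_inner_eq y (Real.sqrt_pos.mpr hs)
  have := re_character_apply_mono χ (hb x hx)
  rwa [hxy, max_self, inv_mul_eq_div, Real.div_sqrt] at this

end HilbertModuleStruct

/-- In a Hilbert module over a commutative unital C*-algebra,
`√⟪y,y⟫` is the least upper bound in `A` of `{|⟪x,y⟫| : ⟪x,x⟫ ≤ 1}`,
where `|a| = √(a*a)`. -/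
theorem isLUB_inner_abs {A : Type*} [CommCStarAlgebra A] [PartialOrder A]
    [StarOrderedRing A] {E : Type*} [AddCommGroup E] [Module A E]
    (hE : HilbertModuleStruct A E) (y : E) :
    IsLUB {a : A | ∃ x : E, hE.inner x x ≤ 1 ∧
        a = CFC.sqrt (star (hE.inner x y) * hE.inner x y)}
      (CFC.sqrt (hE.inner y y)) := by
  refine ⟨?_, fun b hb => hE.sqrt_inner_self_le fun x hx => hb ⟨x, hx, rfl⟩⟩
  rintro _ ⟨x, hx, rfl⟩
  exact hE.abs_inner_le_sqrt_inner_self hx y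

end
end
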